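/- Given a Riemannian metric g and a symmetric (0,2)-tensor T, the Koszul-type pseudoconnection R^g is the unique pseudoconnection Q on TM that is symmetric (Q_X Y − Q_Y X = P(Q)([X,Y])), has principal homomorphism P(Q) determined by g(P(Q)(X),Y) = T(X,Y), and satisfies the compatibility X(T(Y,Z)) = g(Q_X Y, Z) + g(Y, Q_X Z) for all vector fields X, Y, Z. -/

import Mathlib

/- Setting: `M` is a smooth manifold modelled on a real normed space `E`.
We write `Cinf E M` for the ring `C^∞(M)` of smooth real valued functions and model
the `C^∞(M)`-module `𝔛(M)` of smooth vector fields by `VF E M`, the derivations of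
`C^∞(M)`, equipped with their Lie bracket.  A smooth `(0,2)`-tensor field is a
`C^∞(M)`-bilinear map `𝔛(M) × 𝔛(M) → C^∞(M)`, i.e. a term of `Tensor2 E M`. -/

open scoped Manifold
noncomputable section

variable (E : Type*) [NormedAddCommGroup E] [NormedSpace ℝ E]
  (M : Type*) [TopologicalSpace M] [ChartedSpace E M] [IsManifold 𝓘(ℝ, E) (⊤ : ℕ∞) M]

/-- The ring `C^∞(M)` of smooth real valued functions on `M`. -/
abbrev Cinf := C^(⊤ : ℕ∞)⟮𝓘(ℝ, E), M; ℝ⟯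

/-- The `C^∞(M)`-module `𝔛(M)` of smooth vector fields on `M`, modelled as
derivations of `C^∞(M)`; it carries the Lie bracket `⁅·,·⁆`. -/
abbrev VF := Derivation ℝ (Cinf E M) (Cinf E M)

/-- Smooth `(0,2)`-tensor fields on `M`: `C^∞(M)`-bilinear maps `𝔛(M) × 𝔛(M) → C^∞(M)`. -/
abbrev Tensor2 := VF E M →ₗ[Cinf E M] VF E M →ₗ[Cinf E M] Cinf E M

variable {E M}

/-- The Koszul-type expression `ω(X,Y,Z)` built from a `(0,2)`-tensor field `T`:
`X(T(Y,Z)) + Y(T(Z,X)) − Z(T(X,Y)) + T([X,Y],Z) + T([Z,X],Y) − T([Y,Z],X)`. -/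
def koszul (T : Tensor2 E M) (X Y Z : VF E M) : Cinf E M :=
  X (T Y Z) + Y (T Z X) - Z (T X Y) + T ⁅X, Y⁆ Z + T ⁅Z, X⁆ Y - T ⁅Y, Z⁆ X

/-- `g` is a Riemannian metric: a symmetric, pointwise nonnegative, nondegenerate
`(0,2)`-tensor field, for which every `C^∞(M)`-linear functional on vector fields is
represented by a vector field via `g` (the musical isomorphism). -/
def IsRiem (g : Tensor2 E M) : Prop :=
  (∀ X Y, g X Y = g Y X) ∧ (∀ X (p : M), 0 ≤ g X X p) ∧
  (∀ X, (∀ Z, g X Z = 0) → X = 0) ∧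
  (∀ ω : VF E M →ₗ[Cinf E M] Cinf E M, ∃ W, ∀ Z, g W Z = ω Z)

/-- A pseudoconnection on `TM`: an `ℝ`-bilinear map `Q : 𝔛(M) × 𝔛(M) → 𝔛(M)` together
with a `C^∞(M)`-module homomorphism `P` (the principal homomorphism) such that
`Q_{fX} Y = f Q_X Y` and `Q_X (fY) = X(f) P(Y) + f Q_X Y`. -/
structure Pseudoconnection (E : Type*) [NormedAddCommGroup E] [NormedSpace ℝ E]
    (M : Type*) [TopologicalSpace M] [ChartedSpace E M]
    [IsManifold 𝓘(ℝ, E) (⊤ : ℕ∞) M] where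
  Q : VF E M → VF E M → VF E M
  P : VF E M →ₗ[Cinf E M] VF E M
  add_left : ∀ X X' Y, Q (X + X') Y = Q X Y + Q X' Y
  add_right : ∀ X Y Y', Q X (Y + Y') = Q X Y + Q X Y'
  real_smul_left : ∀ (c : ℝ) X Y, Q (c • X) Y = c • Q X Y
  real_smul_right : ∀ (c : ℝ) X Y, Q X (c • Y) = c • Q X Y
  smul_left : ∀ (f : Cinf E M) X Y, Q (f • X) Y = f • Q X Y
  leibniz : ∀ (f : Cinf E M) X Y, Q X (f • Y) = X f • P Y + f • Q X Y

/-- A pseudoconnection is symmetric if `Q_X Y − Q_Y X = P([X,Y])`. -/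
def Pseudoconnection.IsSymmetric {E : Type*} [NormedAddCommGroup E] [NormedSpace ℝ E]
    {M : Type*} [TopologicalSpace M] [ChartedSpace E M]
    [IsManifold 𝓘(ℝ, E) (⊤ : ℕ∞) M] (Q : Pseudoconnection E M) : Prop :=
  ∀ X Y, Q.Q X Y - Q.Q Y X = Q.P ⁅X, Y⁆

/- As for the Levi-Civita connection: adding the compatibility identities over the cyclic
permutations of `X, Y, Z` with signs, and using symmetry to turn `Q_X Y - Q_Y X` into
`P[X,Y]`, hence `g(Q_X Y - Q_Y X, Z)` into `T([X,Y], Z)`, gives the Koszul formula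
`2 g(Q_X Y, Z) = koszul T X Y Z`; nondegeneracy of `g` then forces `Q_X Y = R^g_X Y`. -/

theorem LinearMap.eq_of_forall_apply_eq {R V : Type*} [CommRing R] [AddCommGroup V] [Module R V]
    (g : V →ₗ[R] V →ₗ[R] R) (hnd : ∀ X, (∀ Z, g X Z = 0) → X = 0) {A B : V}
    (h : ∀ Z, g A Z = g B Z) : A = B :=
  sub_eq_zero.mp <| hnd _ fun Z => by rw [map_sub, LinearMap.sub_apply, h, sub_self]

theorem isUnit_two_of_algebra (A : Type*) [Ring A] [Algebra ℝ A] : IsUnit (2 : A) := by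
  simpa only [map_ofNat] using (IsUnit.mk0 (2 : ℝ) two_ne_zero).map (algebraMap ℝ A)

theorem Pseudoconnection.two_mul_apply_eq_koszul (Q : Pseudoconnection E M) {g T : Tensor2 E M}
    (hg : ∀ X Y, g X Y = g Y X) (hsymm : Q.IsSymmetric) (hP : ∀ X Y, g (Q.P X) Y = T X Y)
    (hcompat : ∀ X Y Z : VF E M, X (T Y Z) = g (Q.Q X Y) Z + g Y (Q.Q X Z)) (X Y Z : VF E M) :
    2 * g (Q.Q X Y) Z = koszul T X Y Z := by
  have torsion : ∀ X Y Z, g (Q.Q X Y) Z - g (Q.Q Y X) Z = T ⁅X, Y⁆ Z := fun X Y Z => by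
    rw [← hP, ← hsymm X Y, map_sub, LinearMap.sub_apply]
  rw [koszul, hcompat X Y Z, hcompat Y Z X, hcompat Z X Y,
    hg Y (Q.Q X Z), hg Z (Q.Q Y X), hg X (Q.Q Z Y)]
  linear_combination torsion X Y Z + torsion Z X Y - torsion Y Z X

theorem stmt19_general (g T : Tensor2 E M) (hg : IsRiem g)
    (RG : VF E M → VF E M → VF E M)
    (hRG : ∀ X Y Z, 2 * g (RG X Y) Z = koszul T X Y Z)
    (Q : Pseudoconnection E M) (hsymm : Q.IsSymmetric)
    (hP : ∀ X Y, g (Q.P X) Y = T X Y)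
    (hcompat : ∀ X Y Z : VF E M, X (T Y Z) = g (Q.Q X Y) Z + g Y (Q.Q X Z)) :
    ∀ X Y : VF E M, Q.Q X Y = RG X Y := by
  obtain ⟨g_symm, -, g_nondeg, -⟩ := hg
  intro X Y
  refine g.eq_of_forall_apply_eq g_nondeg fun Z =>
    (isUnit_two_of_algebra (Cinf E M)).mul_left_cancel ?_
  rw [Q.two_mul_apply_eq_koszul g_symm hsymm hP hcompat, hRG]

/-- `R^g` is the unique symmetric pseudoconnection with principal
homomorphism determined by `T` that is compatible with `T`. -/
theorem stmt19 (g T : Tensor2 E M) (hg : IsRiem g) (hT : ∀ X Y, T X Y = T Y X)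
    (RG : VF E M → VF E M → VF E M)
    (hRG : ∀ X Y Z, 2 * g (RG X Y) Z = koszul T X Y Z)
    (Q : Pseudoconnection E M) (hsymm : Q.IsSymmetric)
    (hP : ∀ X Y, g (Q.P X) Y = T X Y)
    (hcompat : ∀ X Y Z : VF E M, X (T Y Z) = g (Q.Q X Y) Z + g Y (Q.Q X Z)) :
    ∀ X Y : VF E M, Q.Q X Y = RG X Y :=
  stmt19_general g T hg RG hRG Q hsymm hP hcompat
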